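/- arXiv:1405.2095 — 2 statements merged into one kernel-verified Lean document; each statement's English description precedes it below -/
import Mathlib

section
/- Let X be a Z^d subshift having the D*-condition with constants k_n. Then for any n ∈ N, any x ∈ X, any (possibly infinite) collection {v_j}_{j∈J} ⊂ Z^d such that the sets v_j + [−(n+k_n), n+k_n]^d are pairwise disjoint, and any patterns {w_j}_{j∈J} ⊆ L_{[−n,n]^d}(X), there exists z ∈ X such that z(v_j + [−n,n]^d) = w_j for every j ∈ J, and z(t) = x(t) for every t not in the union of the sets v_j + [−(n+k_n), n+k_n]^d. -/
set_option maxHeartbeats 1000000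


open Filter MeasureTheory

/-! ### Basic setup: `ℤ^d` configurations, the shift action, subshifts -/

/-- A site of the lattice `ℤ^d`. -/
abbrev Site (d : ℕ) := Fin d → ℤ

/-- A configuration over the alphabet `A` on the lattice `ℤ^d`. -/
abbrev Config (d : ℕ) (A : Type*) := Site d → A

/-- The product (discrete) topology on the space of configurations. -/
def configTop (d : ℕ) (A : Type*) : TopologicalSpace (Config d A) :=
  @Pi.topologicalSpace (Site d) (fun _ => A) (fun _ => ⊥)

/-- The product (discrete) Borel σ-algebra on the space of configurations. -/
def configMS (d : ℕ) (A : Type*) : MeasurableSpace (Config d A) :=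
  @MeasurableSpace.pi (Site d) (fun _ => A) (fun _ => ⊤)

/-- Borel measures on the configuration space. -/
abbrev ConfigMeasure (d : ℕ) (A : Type*) :=
  @MeasureTheory.Measure (Config d A) (configMS d A)

/-- The shift action of `ℤ^d`: `(shift t x) s = x (s + t)`. -/
def shift {d : ℕ} {A : Type*} (t : Site d) (x : Config d A) : Config d A :=
  fun s => x (s + t)

/-- A `ℤ^d` subshift over the alphabet `A`: a closed shift-invariant set of
configurations. -/
structure Subshift (d : ℕ) (A : Type*) where
  carrier : Set (Config d A)
  isClosed' : @IsClosed (Config d A) (configTop d A) carrier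
  shift_mem' : ∀ (t : Site d), ∀ x ∈ carrier, shift t x ∈ carrier

/-- A pattern `p`, whose (finite) shape is the finite set `S ⊆ ℤ^d`, belongs to the
language of the subshift `X` if it appears (somewhere) in a point of `X`. -/
def inLanguage {d : ℕ} {A : Type*} (X : Subshift d A) {S : Finset (Site d)}
    (p : S → A) : Prop :=
  ∃ x ∈ X.carrier, ∃ v : Site d, ∀ s : S, x (v + ↑s) = p s

/-- The box `∏_{i} [1, n i] ⊆ ℤ^d`. -/
noncomputable def boxF (d : ℕ) (n : Fin d → ℕ) : Finset (Site d) :=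
  Fintype.piFinset fun i => Finset.Icc (1 : ℤ) (n i)

/-- The cube `[1, N]^d ⊆ ℤ^d`. -/
noncomputable def cubeF (d N : ℕ) : Finset (Site d) := boxF d fun _ => N

/-- The cube `[-n, n]^d ⊆ ℤ^d`. -/
noncomputable def symCube (d : ℕ) (n : ℕ) : Finset (Site d) :=
  Fintype.piFinset fun _ => Finset.Icc (-(n : ℤ)) (n : ℤ)

/-- The number of patterns of shape `S` in the language of `X`. -/
noncomputable def patternCount {d : ℕ} {A : Type*} (X : Subshift d A)
    (S : Finset (Site d)) : ℕ :=
  Nat.card { p : S → A // inLanguage X p }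

/-- Topological entropy of a subshift:
`h(X) = lim_{n₁,…,n_d → ∞} (1/∏ nᵢ) log |L_{∏ [1,nᵢ]}(X)|`. -/
noncomputable def topEnt {d : ℕ} {A : Type*} (X : Subshift d A) : ℝ :=
  Filter.limsup
    (fun n : Fin d → ℕ =>
      Real.log (patternCount X (boxF d n)) / ∏ i, (n i : ℝ))
    Filter.atTop

/-- The cylinder set determined by a pattern `p` with finite shape `S`. -/
def cylinder {d : ℕ} {A : Type*} {S : Finset (Site d)} (p : S → A) :
    Set (Config d A) :=
  { x | ∀ s : S, x ↑s = p s }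

/-- `H_{μ,N}`: the entropy of `μ` with respect to the partition of the configuration
space given by the patterns of shape `[1,N]^d`. -/
noncomputable def blockEntropy {d : ℕ} {A : Type*} (μ : ConfigMeasure d A)
    (N : ℕ) : ℝ :=
  ∑' p : (cubeF d N → A), Real.negMulLog (μ (cylinder p)).toReal

/-- Measure-theoretic entropy `h(μ) = lim_N H_{μ,N}/N^d = inf_N H_{μ,N}/N^d`. -/
noncomputable def measEnt {d : ℕ} {A : Type*} (μ : ConfigMeasure d A) : ℝ :=
  ⨅ N : ℕ, blockEntropy μ (N + 1) / ((N : ℝ) + 1) ^ d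

/-- `μ` is a shift-invariant Borel probability measure on the subshift `X`. -/
def InvariantProbOn {d : ℕ} {A : Type*} (X : Subshift d A)
    (μ : ConfigMeasure d A) : Prop :=
  @IsProbabilityMeasure _ (configMS d A) μ ∧ μ X.carrier = 1 ∧
    ∀ t : Site d,
      @MeasureTheory.Measure.map _ _ (configMS d A) (configMS d A) (shift t) μ = μ

/-- `μ` is a measure of maximal entropy for the subshift `X`. -/
def IsMME {d : ℕ} {A : Type*} (X : Subshift d A) (μ : ConfigMeasure d A) : Prop :=
  InvariantProbOn X μ ∧ measEnt μ = topEnt X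

/-- A subshift is intrinsically ergodic if it has exactly one measure of maximal
entropy. -/
def IntrinsicallyErgodic {d : ℕ} {A : Type*} (X : Subshift d A) : Prop :=
  ∃! μ : ConfigMeasure d A, IsMME X μ

/-- `φ` is a (topological) factor map from the subshift `X` onto the subshift `Y`:
a continuous shift-commuting surjection. -/
def IsFactorMapOn {d : ℕ} {A B : Type*} (X : Subshift d A) (Y : Subshift d B)
    (φ : Config d A → Config d B) : Prop :=
  @ContinuousOn _ _ (configTop d A) (configTop d B) φ X.carrier ∧
  (∀ x ∈ X.carrier, φ x ∈ Y.carrier) ∧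
  (∀ (t : Site d), ∀ x ∈ X.carrier, φ (shift t x) = shift t (φ x)) ∧
  (∀ y ∈ Y.carrier, ∃ x ∈ X.carrier, φ x = y)

/-- The D*-condition: for any `n` there exists `k_n` such that for any `x, y ∈ X`
there is `z ∈ X` agreeing with `x` on `[-n,n]^d` and with `y` off `[-(n+k_n),n+k_n]^d`. -/
def DStarCondition {d : ℕ} {A : Type*} (X : Subshift d A) : Prop :=
  ∀ n : ℕ, ∃ k : ℕ, ∀ x ∈ X.carrier, ∀ y ∈ X.carrier, ∃ z ∈ X.carrier,
    (∀ t : Site d, (∀ i, |t i| ≤ (n : ℤ)) → z t = x t) ∧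
    (∀ t : Site d, ¬ (∀ i, |t i| ≤ (n : ℤ) + (k : ℤ)) → z t = y t)

/-- Lemma 2.14 of the paper. If `X` has the D*-condition with
constants `k n`, then for any `n`, any `x ∈ X`, any (possibly infinite) collection
`{v_j}` of sites such that the cubes `v_j + [-(n+k_n), n+k_n]^d` are pairwise disjoint,
and any patterns `w_j ∈ L_{[-n,n]^d}(X)`, there is `z ∈ X` with `z(v_j + [-n,n]^d) = w_j`
for all `j`, and `z(t) = x(t)` for all `t` outside the union of the
`v_j + [-(n+k_n), n+k_n]^d`. -/
theorem statement2 {d : ℕ} (hd : 1 ≤ d) {A : Type} [Finite A] (X : Subshift d A)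
    (k : ℕ → ℕ)
    (hD : ∀ n : ℕ, ∀ x ∈ X.carrier, ∀ y ∈ X.carrier, ∃ z ∈ X.carrier,
      (∀ t : Site d, (∀ i, |t i| ≤ (n : ℤ)) → z t = x t) ∧
      (∀ t : Site d, ¬ (∀ i, |t i| ≤ (n : ℤ) + (k n : ℤ)) → z t = y t))
    (n : ℕ) (x : Config d A) (hx : x ∈ X.carrier)
    {J : Type} (v : J → Site d)
    (hdisj : ∀ j j' : J, j ≠ j' → ∀ t : Site d,
      ¬ ((∀ i, |t i - v j i| ≤ (n : ℤ) + (k n : ℤ)) ∧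
         (∀ i, |t i - v j' i| ≤ (n : ℤ) + (k n : ℤ))))
    (w : J → (symCube d n → A)) (hw : ∀ j, inLanguage X (w j)) :
    ∃ z ∈ X.carrier,
      (∀ j : J, ∀ s : symCube d n, z (v j + ↑s) = w j s) ∧
      (∀ t : Site d, (∀ j : J, ¬ (∀ i, |t i - v j i| ≤ (n : ℤ) + (k n : ℤ))) →
        z t = x t) := by
  classical
  letI : TopologicalSpace A := ⊥
  haveI : DiscreteTopology A := ⟨rfl⟩
  -- abbreviation for "t lies in the big cube around v j"
  have hsmem : ∀ s : symCube d n, ∀ i, |(s : Site d) i| ≤ (n : ℤ) := by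
    intro s i
    have := (Fintype.mem_piFinset.mp s.2) i
    rw [Finset.mem_Icc] at this
    exact abs_le.mpr ⟨this.1, this.2⟩
  -- Step 1: modify a point of X at one site v j
  have step1 : ∀ z ∈ X.carrier, ∀ j : J, ∃ z' ∈ X.carrier,
      (∀ s : symCube d n, z' (v j + ↑s) = w j s) ∧
      (∀ t : Site d, ¬ (∀ i, |t i - v j i| ≤ (n : ℤ) + (k n : ℤ)) → z' t = z t) := by
    intro z hz j
    obtain ⟨y, hy, u, hu⟩ := hw j
    obtain ⟨z0, hz0, h1, h2⟩ := hD n (shift u y) (X.shift_mem' u y hy)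
      (shift (v j) z) (X.shift_mem' (v j) z hz)
    refine ⟨shift (-(v j)) z0, X.shift_mem' _ _ hz0, ?_, ?_⟩
    · intro s
      have key : shift (-(v j)) z0 (v j + ↑s) = z0 ↑s := by
        show z0 (v j + ↑s + -(v j)) = z0 ↑s
        congr 1
        abel
      rw [key, h1 ↑s (hsmem s)]
      show y (↑s + u) = w j s
      rw [add_comm]
      exact hu s
    · intro t ht
      have ht' : ¬ (∀ i, |(t + -(v j)) i| ≤ (n : ℤ) + (k n : ℤ)) := by
        simpa [sub_eq_add_neg] using ht
      show z0 (t + -(v j)) = z t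
      rw [h2 _ ht']
      show z (t + -(v j) + v j) = z t
      congr 1
      abel
  -- Step 2: modify x on finitely many sites
  have step2 : ∀ F : Finset J, ∃ z ∈ X.carrier,
      (∀ j ∈ F, ∀ s : symCube d n, z (v j + ↑s) = w j s) ∧
      (∀ t : Site d, (∀ j ∈ F, ¬ (∀ i, |t i - v j i| ≤ (n : ℤ) + (k n : ℤ))) →
        z t = x t) := by
    intro F
    induction F using Finset.induction_on with
    | empty => exact ⟨x, hx, by simp, fun t _ => rfl⟩
    | @insert j F hjF ih =>
      obtain ⟨z, hz, hzp, hzx⟩ := ih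
      obtain ⟨z', hz', h1, h2⟩ := step1 z hz j
      refine ⟨z', hz', ?_, ?_⟩
      · intro j' hj' s
        rcases Finset.mem_insert.mp hj' with rfl | hj'
        · exact h1 s
        · have hne : j ≠ j' := fun h => hjF (h ▸ hj')
          have hnb : ¬ (∀ i, |(v j' + ↑s) i - v j i| ≤ (n : ℤ) + (k n : ℤ)) := by
            intro hb
            refine hdisj j j' hne (v j' + ↑s) ⟨hb, fun i => ?_⟩
            have : (v j' + (↑s : Site d)) i - v j' i = (↑s : Site d) i := by
              simp [Pi.add_apply]
            rw [this]
            exact le_trans (hsmem s i) (le_add_of_nonneg_right (Int.natCast_nonneg _))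
          rw [h2 _ hnb]
          exact hzp j' hj' s
      · intro t ht
        rw [h2 t (ht j (Finset.mem_insert_self j F))]
        exact hzx t (fun j' hj' => ht j' (Finset.mem_insert_of_mem hj'))
  -- Step 3: pass to the limit along an ultrafilter
  choose zF hzF hzFp hzFx using step2
  haveI : Nonempty (Finset J) := ⟨∅⟩
  let U : Ultrafilter (Finset J) := Ultrafilter.of atTop
  have hU : ∀ s : Set (Finset J), s ∈ (atTop : Filter (Finset J)) → s ∈ U :=
    fun s hs => Ultrafilter.of_le atTop hs
  have hlim : ∀ t : Site d, ∃ a : A, {F | zF F t = a} ∈ U := by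
    intro t
    obtain ⟨a, ha⟩ := (U.map fun F => zF F t).eq_pure_of_finite
    refine ⟨a, ?_⟩
    have : {a} ∈ (U.map fun F => zF F t) := by
      rw [ha]; exact Filter.mem_pure.mpr rfl
    simpa [Ultrafilter.mem_map, Set.preimage, Set.mem_singleton_iff] using this
  choose z hzlim using hlim
  have hcl : @IsClosed (Config d A) Pi.topologicalSpace X.carrier := X.isClosed'
  have htend : Filter.Tendsto (fun F => zF F) (U : Filter (Finset J)) (nhds z) := by
    rw [tendsto_pi_nhds]
    intro t
    rw [nhds_discrete, Filter.tendsto_pure]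
    exact hzlim t
  refine ⟨z, hcl.mem_of_tendsto htend (Filter.Eventually.of_forall hzF), ?_, ?_⟩
  · intro j s
    have hmem : {F : Finset J | j ∈ F} ∈ (U : Ultrafilter (Finset J)) := by
      apply hU
      have : {F : Finset J | {j} ≤ F} ∈ (atTop : Filter (Finset J)) := Filter.mem_atTop {j}
      simpa [Finset.singleton_subset_iff] using this
    obtain ⟨F, hF1, hF2⟩ := Filter.nonempty_of_mem
      (Filter.inter_mem hmem (hzlim (v j + ↑s)))
    rw [← hF2]
    exact hzFp F j hF1 s
  · intro t ht
    obtain ⟨F, hF⟩ := Filter.nonempty_of_mem (hzlim t)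
    rw [← hF]
    exact hzFx F t (fun j' _ => ht j')
end

section
/- If X is a nontrivial Z^d subshift with the D*-condition, then there exists a pattern w ∈ L(X) such that the subshift X' consisting of all points of X containing no occurrence of w satisfies h(X') > 0. -/
open Filter MeasureTheory

/-- The pattern `w` (of finite shape `S`) occurs at position `v` in the configuration
`x`. -/
def occursAt {d : ℕ} {A : Type*} {S : Finset (Site d)} (x : Config d A)
    (w : S → A) (v : Site d) : Prop :=
  ∀ s : S, x (v + ↑s) = w s

/-- The subshift consisting of all points of `X` containing no occurrence of the
pattern `w`. -/
def avoiding {d : ℕ} {A : Type*} (X : Subshift d A) {S : Finset (Site d)}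
    (w : S → A) : Subshift d A where
  carrier := { x ∈ X.carrier | ∀ v : Site d, ¬ occursAt x w v }
  isClosed' := by
    letI : TopologicalSpace A := ⊥
    haveI : DiscreteTopology A := ⟨rfl⟩
    have h : { x ∈ X.carrier | ∀ v : Site d, ¬ occursAt x w v } =
        X.carrier ∩ ⋂ v : Site d, { x : Config d A | occursAt x w v }ᶜ := by
      ext x; simp [Set.mem_iInter]
    rw [h]
    refine IsClosed.inter X.isClosed' (isClosed_iInter fun v => ?_)
    refine IsOpen.isClosed_compl ?_
    have h2 : { x : Config d A | occursAt x w v } =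
        ⋂ s : S, (fun x : Config d A => x (v + ↑s)) ⁻¹' {w s} := by
      ext x; simp [occursAt, Set.mem_iInter]
    rw [h2]
    exact isOpen_iInter_of_finite fun s =>
      (isOpen_discrete _).preimage (continuous_apply (v + (s : Site d)))
  shift_mem' := by
    intro t x hx
    refine ⟨X.shift_mem' t x hx.1, fun v hocc => hx.2 (v + t) (fun s => ?_)⟩
    have h := hocc s
    rwa [shift, add_right_comm] at h


private lemma two_pow_aux (m d : ℕ) (hd : 1 ≤ d) :
    ∃ t : ℕ, 1 ≤ t ∧ ((t+1)*m)^d + 1 < 2^(t^d) := by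
  refine ⟨2^(m + 2*d + 2), Nat.one_le_two_pow, ?_⟩
  set t := 2^(m + 2*d + 2) with ht
  have h1t : 1 ≤ t := Nat.one_le_two_pow
  set E := 2*m + 2*d + 3 with hE
  have h3 : (t+1)*m ≤ 2^E := by
    have h1 : t + 1 ≤ 2^(m + 2*d + 3) := by
      have h0 : t + 1 ≤ t + t := by omega
      have h2t : t + t = 2^(m + 2*d + 3) := by
        rw [ht, ← two_mul, ← pow_succ']
      omega
    have h2 : m ≤ 2^m := Nat.le_of_lt (Nat.lt_two_pow_self (n := m))
    calc (t+1)*m ≤ 2^(m + 2*d + 3) * 2^m := Nat.mul_le_mul h1 h2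
      _ = 2^E := by rw [← pow_add, hE]; ring_nf
  have h4 : ((t+1)*m)^d ≤ 2^(E*d) := by
    calc ((t+1)*m)^d ≤ (2^E)^d := Nat.pow_le_pow_left h3 d
      _ = 2^(E*d) := by rw [← pow_mul]
  have h6 : E*d + 1 < t := by
    have hm1 : m + 1 ≤ 2^m := by have := Nat.lt_two_pow_self (n := m); omega
    have hd1 : d + 1 ≤ 2^d := by have := Nat.lt_two_pow_self (n := d); omega
    have htt : t = 2^m * 2^d * 2^d * 4 := by
      rw [ht, show m + 2*d + 2 = m + (d + (d + 2)) by ring, pow_add, pow_add, pow_add]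
      ring
    rw [htt]
    have hfour : (m+1) * (d+1) * (d+1) * 4 ≤ 2^m * 2^d * 2^d * 4 :=
      Nat.mul_le_mul (Nat.mul_le_mul (Nat.mul_le_mul hm1 hd1) hd1) (le_refl 4)
    have key : E*d + 1 < (m+1) * (d+1) * (d+1) * 4 := by
      have e1 : (m+1)*(d+1)*(d+1)*4 = 4*(m*(d*d)) + 8*(m*d) + 4*m + 4*(d*d) + 8*d + 4 := by ring
      have e2 : E*d + 1 = 2*(m*d) + 2*(d*d) + 3*d + 1 := by rw [hE]; ring
      rw [e1, e2]
      have := Nat.zero_le (m*(d*d))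
      have := Nat.zero_le (m*d)
      have := Nat.zero_le (d*d)
      have := Nat.zero_le m
      have := Nat.zero_le d
      linarith
    omega
  have h7 : 2^(E*d+2) ≤ 2^(t^d) := by
    apply Nat.pow_le_pow_right (by norm_num)
    have : t ≤ t^d := Nat.le_self_pow (by omega) t
    omega
  have h5 : ((t+1)*m)^d + 1 < 2^(E*d+2) := by
    have h9 : 1 ≤ 2^(E*d) := Nat.one_le_two_pow
    have h2' : 2^(E*d+2) = 2^(E*d) + 2^(E*d) + 2^(E*d) + 2^(E*d) := by
      rw [show E*d+2 = E*d+1+1 by ring, pow_succ, pow_succ]; ring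
    omega
  omega

private lemma aux_limit {d : ℕ} {A : Type} [Finite A] (X : Subshift d A) {ι : Type}
    (e : ι → Site d) (ζ : ι → A)
    (hF : ∀ F : Finset ι, ∃ z ∈ X.carrier, ∀ u ∈ F, z (e u) = ζ u) :
    ∃ z ∈ X.carrier, ∀ u : ι, z (e u) = ζ u := by
  classical
  choose zF hzF1 hzF2 using hF
  letI : TopologicalSpace A := ⊥
  haveI : DiscreteTopology A := ⟨rfl⟩
  letI : TopologicalSpace (Config d A) := configTop d A
  haveI : CompactSpace A := Finite.compactSpace
  haveI : CompactSpace (Config d A) := by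
    show CompactSpace (∀ _ : Site d, A)
    exact Pi.compactSpace
  have hcl : IsClosed X.carrier := X.isClosed'
  have hcs : IsCompact X.carrier := hcl.isCompact
  set l : Filter (Config d A) := Filter.map zF Filter.atTop with hl
  haveI : l.NeBot := Filter.map_neBot
  have hle : l ≤ Filter.principal X.carrier :=
    Filter.le_principal_iff.mpr (Filter.mem_map.mpr (Filter.Eventually.of_forall hzF1))
  obtain ⟨z, hzX, hcp⟩ := hcs.exists_clusterPt hle
  refine ⟨z, hzX, fun u => ?_⟩
  have hUopen : IsOpen {x : Config d A | x (e u) = z (e u)} := by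
    have hc : Continuous (fun x : Config d A => x (e u)) := continuous_apply (e u)
    have heq : {x : Config d A | x (e u) = z (e u)} =
        (fun x : Config d A => x (e u)) ⁻¹' {z (e u)} := rfl
    rw [heq]; exact (isOpen_discrete _).preimage hc
  have hU : {x : Config d A | x (e u) = z (e u)} ∈ nhds z := hUopen.mem_nhds rfl
  have hV : {x : Config d A | x (e u) = ζ u} ∈ l := by
    rw [hl, Filter.mem_map]
    refine Filter.mem_of_superset (Filter.mem_atTop ({u} : Finset ι)) ?_
    intro F hF
    exact hzF2 F u (Finset.singleton_subset_iff.mp hF)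
  haveI : (nhds z ⊓ l).NeBot := hcp
  obtain ⟨x₀, hx₀⟩ := Filter.nonempty_of_mem
    (Filter.inter_mem (Filter.mem_inf_of_left hU) (Filter.mem_inf_of_right hV))
  exact hx₀.1.symm.trans hx₀.2
set_option maxHeartbeats 2000000
/-- Lemma 2.15 of the paper. If `X` is a nontrivial `ℤ^d` subshift
with the D*-condition, then there is a pattern `w ∈ L(X)` such that the subshift `X'`
of points of `X` with no occurrence of `w` has positive topological entropy. -/
theorem statement3 {d : ℕ} (hd : 1 ≤ d) {A : Type} [Finite A] (X : Subshift d A)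
    (hD : DStarCondition X)
    (hnontriv : ∃ x ∈ X.carrier, ∃ y ∈ X.carrier, x ≠ y) :
    ∃ (S : Finset (Site d)) (w : S → A),
      inLanguage X w ∧ 0 < topEnt (avoiding X w) := by
  classical
  obtain ⟨x₀, hx₀, y₀, hy₀, hxy⟩ := hnontriv
  obtain ⟨t₀, ht₀⟩ := Function.ne_iff.mp hxy
  set xp := shift t₀ x₀ with hxp
  set yp := shift t₀ y₀ with hyp
  have hxpX : xp ∈ X.carrier := X.shift_mem' _ _ hx₀
  have hypX : yp ∈ X.carrier := X.shift_mem' _ _ hy₀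
  set a := xp 0 with ha
  set b := yp 0 with hb
  have hab : a ≠ b := by
    simpa [ha, hb, hxp, hyp, shift, zero_add] using ht₀
  obtain ⟨k, hk⟩ := hD 0
  set M : ℕ := k + 1 with hM
  -- single-site gluing step
  have step : ∀ (p : Config d A), p ∈ X.carrier → ∀ (z : Config d A), z ∈ X.carrier →
      ∀ g : Site d, ∃ z' ∈ X.carrier, z' g = p 0 ∧
        ∀ s : Site d, (¬ ∀ i, |s i - g i| ≤ (k:ℤ)) → z' s = z s := by
    intro p hp z hz g
    obtain ⟨ζ, hζX, h1, h2⟩ := hk p hp (shift g z) (X.shift_mem' g z hz)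
    refine ⟨shift (-g) ζ, X.shift_mem' _ _ hζX, ?_, ?_⟩
    · have h0 : g + -g = (0 : Site d) := by funext i; simp
      have := h1 0 (by intro i; simp)
      simpa [shift, h0] using this
    · intro s hs
      have h2' := h2 (s - g) (by
        simpa [sub_eq_add_neg] using hs)
      have hsg : s - g + g = s := by funext i; simp
      simpa [shift, sub_eq_add_neg, hsg] using h2'
  -- finite gluing along the grid M·ℤ^d
  have glue : ∀ (ζv : (Fin d → ℤ) → A), (∀ u, ζv u = a ∨ ζv u = b) →
      ∀ F : Finset (Fin d → ℤ), ∃ z ∈ X.carrier,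
        ∀ u ∈ F, z (fun i => (M:ℤ) * u i) = ζv u := by
    intro ζv hζv F
    induction F using Finset.induction_on with
    | empty => exact ⟨xp, hxpX, by simp⟩
    | @insert u₀ F hu₀ ih =>
      obtain ⟨z, hzX, hzv⟩ := ih
      obtain ⟨p, hpX, hp0⟩ : ∃ p ∈ X.carrier, p 0 = ζv u₀ := by
        rcases hζv u₀ with h | h
        · exact ⟨xp, hxpX, by rw [← ha, h]⟩
        · exact ⟨yp, hypX, by rw [← hb, h]⟩
      obtain ⟨z', hz'X, hz'g, hz'pres⟩ := step p hpX z hzX (fun i => (M:ℤ) * u₀ i)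
      refine ⟨z', hz'X, fun u hu => ?_⟩
      rcases Finset.mem_insert.mp hu with rfl | huF
      · rw [hz'g, hp0]
      · rw [hz'pres _ ?_]
        · exact hzv u huF
        · have hne : u ≠ u₀ := fun h => hu₀ (h ▸ huF)
          obtain ⟨i, hi⟩ := Function.ne_iff.mp hne
          push_neg
          refine ⟨i, ?_⟩
          have h1 : (M:ℤ) * u i - (M:ℤ) * u₀ i = (M:ℤ) * (u i - u₀ i) := by ring
          rw [h1, abs_mul]
          have h2 : (1:ℤ) ≤ |u i - u₀ i| := Int.one_le_abs (sub_ne_zero.mpr hi)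
          have h3 : |(M:ℤ)| = (M:ℤ) := abs_of_nonneg (by positivity)
          rw [h3]
          have : (k:ℤ) < (M:ℤ) := by rw [hM]; push_cast; omega
          nlinarith
  -- infinite gluing
  have glueInf : ∀ (ζv : (Fin d → ℤ) → A), (∀ u, ζv u = a ∨ ζv u = b) →
      ∃ z ∈ X.carrier, ∀ u, z (fun i => (M:ℤ) * u i) = ζv u :=
    fun ζv hζv => aux_limit X _ ζv (glue ζv hζv)
  -- choose supercell size t
  obtain ⟨t, ht1, ht2⟩ := two_pow_aux M d hd
  set L : ℕ := 2*t*M with hL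
  set S : Finset (Site d) := cubeF d L with hS
  set W : Config d A := xp with hW
  set w : S → A := fun s => W ↑s with hw
  have hwlang : inLanguage X w := ⟨xp, hxpX, 0, fun s => by simp [hw, hW]⟩
  refine ⟨S, w, hwlang, ?_⟩
  set val : Bool → A := fun c => if c then a else b with hval
  have valinj : Function.Injective val := by
    intro c1 c2 h
    cases c1 <;> cases c2 <;> first
      | rfl
      | (exfalso; simp only [hval, if_true, if_false] at h;
         first | exact hab h.symm | exact hab h)
  set fδ : (Fin d → ℤ) → ((Fin d → Fin t) → Bool) :=
    fun δ r => if W (fun i => δ i + (M:ℤ) * ((r i : ℕ) : ℤ)) = a then true else false with hfδ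
  set DFin : Finset (Fin d → ℤ) :=
    Fintype.piFinset (fun _ => Finset.Icc (1:ℤ) (((t+1)*M : ℕ) : ℤ)) with hDFin
  set BadF : Finset ((Fin d → Fin t) → Bool) := DFin.image fδ with hBadF
  have hBadcard : BadF.card ≤ ((t+1)*M)^d := by
    refine le_trans Finset.card_image_le ?_
    rw [hDFin, Fintype.card_piFinset]
    simp only [Int.card_Icc]
    rw [show ((((t:ℕ)+1)*M : ℕ) : ℤ) + 1 - 1 = (((t+1)*M : ℕ) : ℤ) by ring, Int.toNat_natCast]
    simp
  have hVcard : Fintype.card ((Fin d → Fin t) → Bool) = 2^(t^d) := by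
    rw [Fintype.card_fun, Fintype.card_fun]
    simp
  obtain ⟨β₁, hβ₁, β₂, hβ₂, hββ⟩ : ∃ β₁ ∈ BadFᶜ, ∃ β₂ ∈ BadFᶜ, β₁ ≠ β₂ := by
    apply Finset.one_lt_card.mp
    have h1 : BadFᶜ.card = Fintype.card ((Fin d → Fin t) → Bool) - BadF.card :=
      Finset.card_compl BadF
    rw [h1, hVcard]
    omega
  have hβ₁' : β₁ ∉ BadF := Finset.mem_compl.mp hβ₁
  have hβ₂' : β₂ ∉ BadF := Finset.mem_compl.mp hβ₂
  have htM : 1 ≤ M * t := Nat.one_le_iff_ne_zero.mpr (by positivity)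
  -- main counting estimate
  have key : ∀ n : Fin d → ℕ,
      2^(∏ i, (n i / (M*t) - 1)) ≤ patternCount (avoiding X w) (boxF d n) := by
    intro n
    set Li : Fin d → ℕ := fun i => n i / (M*t) - 1 with hLi
    set Λ : Finset (Fin d → ℤ) :=
      Fintype.piFinset (fun i => Finset.Icc (1:ℤ) ((Li i : ℕ) : ℤ)) with hΛ
    set ηθ : (↥Λ → Bool) → (Fin d → ℤ) → ((Fin d → Fin t) → Bool) :=
      fun θ c => if h : c ∈ Λ then (if θ ⟨c, h⟩ then β₁ else β₂) else β₂ with hηθ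
    have htz : (0:ℤ) < (t:ℤ) := by exact_mod_cast ht1
    have hmodlt : ∀ (u : Fin d → ℤ) (i : Fin d), ((u i) % (t:ℤ)).toNat < t := by
      intro u i
      have h1 : 0 ≤ (u i) % (t:ℤ) := Int.emod_nonneg _ (by omega)
      have h2 : (u i) % (t:ℤ) < (t:ℤ) := Int.emod_lt_of_pos _ htz
      omega
    set dec : (Fin d → ℤ) → (Fin d → ℤ) := fun u i => (u i) / (t:ℤ) with hdec
    set rem : (Fin d → ℤ) → (Fin d → Fin t) :=
      fun u i => ⟨((u i) % (t:ℤ)).toNat, hmodlt u i⟩ with hrem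
    set ζv : (↥Λ → Bool) → (Fin d → ℤ) → A := fun θ u => val (ηθ θ (dec u) (rem u)) with hζv
    have hζvab : ∀ θ u, ζv θ u = a ∨ ζv θ u = b := by
      intro θ u
      have hv : ∀ bb : Bool, val bb = a ∨ val bb = b := by
        intro bb
        cases bb
        · right; simp [hval]
        · left; simp [hval]
      exact hv _
    choose zθ hzθX hzθval using fun θ : ↥Λ → Bool => glueInf (ζv θ) (hζvab θ)
    -- decomposition of an aligned grid index
    have hdec_eq : ∀ (c : Fin d → ℤ) (r : Fin d → Fin t),
        dec (fun i => (t:ℤ) * c i + ((r i : ℕ) : ℤ)) = c := by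
      intro c r; funext i
      rw [hdec]
      show ((t:ℤ) * c i + ((r i : ℕ) : ℤ)) / (t:ℤ) = c i
      rw [add_comm, Int.add_mul_ediv_left _ _ (by omega)]
      rw [Int.ediv_eq_zero_of_lt (by positivity) (by exact_mod_cast (r i).2)]
      ring
    have hrem_eq : ∀ (c : Fin d → ℤ) (r : Fin d → Fin t),
        rem (fun i => (t:ℤ) * c i + ((r i : ℕ) : ℤ)) = r := by
      intro c r; funext i
      rw [hrem]
      show (⟨((((t:ℤ) * c i + ((r i : ℕ) : ℤ))) % (t:ℤ)).toNat, _⟩ : Fin t) = r i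
      have h1 : ((t:ℤ) * c i + ((r i : ℕ) : ℤ)) % (t:ℤ) = ((r i : ℕ) : ℤ) := by
        rw [add_comm, Int.add_mul_emod_self_left,
          Int.emod_eq_of_lt (by positivity) (by exact_mod_cast (r i).2)]
      apply Fin.ext
      simp [h1]
    have grid_eval : ∀ θ (c : Fin d → ℤ) (r : Fin d → Fin t),
        zθ θ (fun i => (M:ℤ) * ((t:ℤ) * c i + ((r i : ℕ) : ℤ))) = val (ηθ θ c r) := by
      intro θ c r
      have h := hzθval θ (fun i => (t:ℤ) * c i + ((r i : ℕ) : ℤ))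
      rw [h, hζv]
      simp only []
      rw [hdec_eq c r, hrem_eq c r]
    -- the glued points avoid w
    have kill : ∀ θ (v : Site d), ¬ occursAt (zθ θ) w v := by
      intro θ v hocc
      set q : ℤ := ((M*t : ℕ) : ℤ) with hq
      have hqpos : (0:ℤ) < q := by rw [hq]; exact_mod_cast htM
      set c : Fin d → ℤ := fun i => (v i) / q + 1 with hc
      set δ : Fin d → ℤ := fun i => q * c i - v i with hδ
      have hδbound : ∀ i, 1 ≤ δ i ∧ δ i ≤ q := by
        intro i
        have he := Int.mul_ediv_add_emod (v i) q
        have h1 : 0 ≤ (v i) % q := Int.emod_nonneg _ (by omega)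
        have h2 : (v i) % q < q := Int.emod_lt_of_pos _ hqpos
        constructor
        · rw [hδ, hc]; push_cast; nlinarith [he]
        · rw [hδ, hc]; push_cast; nlinarith [he]
      have hη : ηθ θ c = fδ δ := by
        funext r
        have hsmem : (fun i => δ i + (M:ℤ) * ((r i : ℕ) : ℤ)) ∈ S := by
          show _ ∈ cubeF d L
          rw [cubeF, boxF, Fintype.mem_piFinset]
          intro i
          rw [Finset.mem_Icc]
          have hb1 := (hδbound i).1
          have hb2 := (hδbound i).2
          have hrlt : ((r i : ℕ) : ℤ) < (t:ℤ) := by exact_mod_cast (r i).2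
          have hrnn : (0:ℤ) ≤ ((r i : ℕ) : ℤ) := by positivity
          constructor
          · have : (0:ℤ) ≤ (M:ℤ) * ((r i : ℕ) : ℤ) := by positivity
            omega
          · have hMq : (M:ℤ) * ((r i : ℕ) : ℤ) ≤ (M:ℤ) * ((t:ℤ) - 1) := by
              have : ((r i : ℕ) : ℤ) ≤ (t:ℤ) - 1 := by omega
              exact mul_le_mul_of_nonneg_left this (by positivity)
            have hLcast : ((L:ℕ) : ℤ) = 2 * (t:ℤ) * (M:ℤ) := by rw [hL]; push_cast; ring
            have hqcast : q = (M:ℤ) * (t:ℤ) := by rw [hq]; push_cast; ring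
            rw [hLcast]
            nlinarith
        have hoc := hocc ⟨_, hsmem⟩
        have hsite : (v + fun i => δ i + (M:ℤ) * ((r i : ℕ) : ℤ)) =
            (fun i => (M:ℤ) * ((t:ℤ) * c i + ((r i : ℕ) : ℤ))) := by
          funext i
          have hqcast : q = (M:ℤ) * (t:ℤ) := by rw [hq]; push_cast; ring
          show v i + (δ i + (M:ℤ) * ((r i : ℕ) : ℤ)) = (M:ℤ) * ((t:ℤ) * c i + ((r i : ℕ) : ℤ))
          rw [hδ]
          show v i + (q * c i - v i + (M:ℤ) * ((r i : ℕ) : ℤ)) = _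
          rw [hqcast]; ring
        rw [hsite] at hoc
        rw [grid_eval] at hoc
        -- hoc : val (ηθ θ c r) = w ⟨...⟩ = W (...)
        have hwval : w ⟨(fun i => δ i + (M:ℤ) * ((r i : ℕ) : ℤ)), hsmem⟩ =
            W (fun i => δ i + (M:ℤ) * ((r i : ℕ) : ℤ)) := rfl
        rw [hwval] at hoc
        show ηθ θ c r = if W (fun i => δ i + (M:ℤ) * ((r i : ℕ) : ℤ)) = a then true else false
        cases hcase : ηθ θ c r
        · rw [hcase] at hoc
          have hWb : W (fun i => δ i + (M:ℤ) * ((r i : ℕ) : ℤ)) = b := by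
            rw [← hoc]; simp [hval]
          rw [if_neg (fun h => hab (h.symm.trans hWb))]
        · rw [hcase] at hoc
          have hWa : W (fun i => δ i + (M:ℤ) * ((r i : ℕ) : ℤ)) = a := by
            rw [← hoc]; simp [hval]
          rw [if_pos hWa]
      have hδD : δ ∈ DFin := by
        rw [hDFin, Fintype.mem_piFinset]
        intro i
        rw [Finset.mem_Icc]
        have hb1 := (hδbound i).1
        have hb2 := (hδbound i).2
        have : q ≤ (((t+1)*M : ℕ) : ℤ) := by rw [hq]; push_cast; nlinarith
        omega
      have hbad : ηθ θ c ∈ BadF := by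
        rw [hη, hBadF]
        exact Finset.mem_image_of_mem _ hδD
      rw [hηθ] at hbad
      by_cases hcΛ : c ∈ Λ
      · simp only [hcΛ, dif_pos] at hbad
        cases hθc : θ ⟨c, hcΛ⟩
        · rw [hθc] at hbad; simp at hbad; exact hβ₂' hbad
        · rw [hθc] at hbad; simp at hbad; exact hβ₁' hbad
      · simp only [hcΛ, dif_neg, not_false_iff] at hbad
        exact hβ₂' hbad
    -- glued points lie in the avoiding subshift
    have hmemav : ∀ θ, zθ θ ∈ (avoiding X w).carrier := fun θ => ⟨hzθX θ, kill θ⟩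
    set pat : (↥Λ → Bool) → {p : ↥(boxF d n) → A // inLanguage (avoiding X w) p} :=
      fun θ => ⟨fun s => zθ θ ↑s, ⟨zθ θ, hmemav θ, 0, fun s => by simp⟩⟩ with hpat
    have hpatinj : Function.Injective pat := by
      intro θ₁ θ₂ hpe
      by_contra hne
      obtain ⟨cc, hcc⟩ := Function.ne_iff.mp hne
      obtain ⟨r₀, hr₀⟩ := Function.ne_iff.mp hββ
      obtain ⟨c, hcΛ⟩ := cc
      have hcbound : ∀ i, 1 ≤ c i ∧ c i ≤ ((Li i : ℕ) : ℤ) := by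
        intro i
        have hmem := (Fintype.mem_piFinset.mp hcΛ) i
        rw [Finset.mem_Icc] at hmem
        exact hmem
      have hsite_mem : (fun i => (M:ℤ) * ((t:ℤ) * c i + ((r₀ i : ℕ) : ℤ))) ∈ boxF d n := by
        rw [boxF, Fintype.mem_piFinset]
        intro i
        rw [Finset.mem_Icc]
        have h1 := (hcbound i).1
        have h2 := (hcbound i).2
        have hrlt : ((r₀ i : ℕ) : ℤ) < (t:ℤ) := by exact_mod_cast (r₀ i).2
        have hrnn : (0:ℤ) ≤ ((r₀ i : ℕ) : ℤ) := by positivity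
        have hMz : (1:ℤ) ≤ (M:ℤ) := by exact_mod_cast (by omega : 1 ≤ M)
        have hLi1 : 1 ≤ Li i := by exact_mod_cast le_trans h1 h2
        have hdivge : 2 ≤ n i / (M*t) := by
          have hLid : Li i = n i / (M*t) - 1 := by rw [hLi]
          omega
        have hmulle : M * t * (Li i + 1) ≤ n i := by
          have hLid : Li i = n i / (M*t) - 1 := by rw [hLi]
          have h3 : Li i + 1 = n i / (M*t) := by omega
          rw [h3, mul_comm]
          exact Nat.div_mul_le_self (n i) (M*t)
        have hmulle' : ((M:ℤ) * (t:ℤ)) * (((Li i : ℕ) : ℤ) + 1) ≤ (n i : ℤ) := by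
          exact_mod_cast hmulle
        constructor
        · show (1:ℤ) ≤ (M:ℤ) * ((t:ℤ) * c i + ((r₀ i : ℕ) : ℤ))
          have htc : (1:ℤ) ≤ (t:ℤ) * c i := by nlinarith
          nlinarith
        · show (M:ℤ) * ((t:ℤ) * c i + ((r₀ i : ℕ) : ℤ)) ≤ (n i : ℤ)
          have e1 : (0:ℤ) ≤ (M:ℤ) * ((t:ℤ) - 1 - ((r₀ i : ℕ) : ℤ)) :=
            mul_nonneg (by linarith) (by linarith)
          have e2 : (0:ℤ) ≤ ((M:ℤ)*(t:ℤ)) * (((Li i : ℕ) : ℤ) - c i) :=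
            mul_nonneg (by positivity) (by linarith)
          nlinarith [e1, e2, hmulle']
      have hpe' : zθ θ₁ (fun i => (M:ℤ) * ((t:ℤ) * c i + ((r₀ i : ℕ) : ℤ))) =
          zθ θ₂ (fun i => (M:ℤ) * ((t:ℤ) * c i + ((r₀ i : ℕ) : ℤ))) :=
        congrFun (Subtype.ext_iff.mp hpe) ⟨_, hsite_mem⟩
      have hveq : ηθ θ₁ c r₀ = ηθ θ₂ c r₀ :=
        valinj ((grid_eval θ₁ c r₀).symm.trans (hpe'.trans (grid_eval θ₂ c r₀)))
      rw [hηθ] at hveq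
      simp only [hcΛ, dif_pos] at hveq
      rcases Bool.eq_false_or_eq_true (θ₁ ⟨c, hcΛ⟩) with hb1 | hb1 <;>
        rcases Bool.eq_false_or_eq_true (θ₂ ⟨c, hcΛ⟩) with hb2 | hb2
      · exact hcc (hb1.trans hb2.symm)
      · rw [hb1, hb2] at hveq; simp at hveq
        first | exact hr₀ hveq | exact hr₀ hveq.symm
      · rw [hb1, hb2] at hveq; simp at hveq
        first | exact hr₀ hveq | exact hr₀ hveq.symm
      · exact hcc (hb1.trans hb2.symm)
    have hcard : Nat.card (↥Λ → Bool) ≤ patternCount (avoiding X w) (boxF d n) := by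
      rw [patternCount]
      exact Nat.card_le_card_of_injective pat hpatinj
    have hΛcard : Λ.card = ∏ i, Li i := by
      rw [hΛ, Fintype.card_piFinset]
      exact Finset.prod_congr rfl fun i _ => by rw [Int.card_Icc]; simp
    have h2pow : Nat.card (↥Λ → Bool) = 2^(∏ i, Li i) := by
      rw [Nat.card_eq_fintype_card, Fintype.card_fun, Fintype.card_coe, hΛcard]
      norm_num
    calc 2^(∏ i, Li i) = Nat.card (↥Λ → Bool) := h2pow.symm
      _ ≤ _ := hcard
  -- analytic part: bound the limsup from below
  haveI : Nonempty A := ⟨a⟩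
  have hApos : 0 < Nat.card A := Nat.card_pos
  have hcountpos : ∀ n : Fin d → ℕ, 1 ≤ patternCount (avoiding X w) (boxF d n) :=
    fun n => le_trans Nat.one_le_two_pow (key n)
  have hboxcard : ∀ n : Fin d → ℕ, (boxF d n).card = ∏ i, n i := by
    intro n
    rw [boxF, Fintype.card_piFinset]
    exact Finset.prod_congr rfl fun i _ => by rw [Int.card_Icc]; simp
  have hcount_ub : ∀ n : Fin d → ℕ,
      patternCount (avoiding X w) (boxF d n) ≤ (Nat.card A)^(∏ i, n i) := by
    intro n
    rw [patternCount, ← hboxcard n]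
    calc Nat.card {p : ↥(boxF d n) → A // inLanguage (avoiding X w) p}
        ≤ Nat.card (↥(boxF d n) → A) :=
          Nat.card_le_card_of_injective Subtype.val Subtype.val_injective
      _ = (Nat.card A)^((boxF d n).card) := by
          rw [Nat.card_fun, Nat.card_eq_fintype_card (α := ↥(boxF d n)), Fintype.card_coe]
  set f : (Fin d → ℕ) → ℝ := fun n =>
    Real.log (patternCount (avoiding X w) (boxF d n)) / ∏ i, (n i : ℝ) with hf
  have hbdd : Filter.IsBoundedUnder (· ≤ ·) Filter.atTop f := by
    apply Filter.isBoundedUnder_of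
    refine ⟨Real.log (Nat.card A), fun n => ?_⟩
    show f n ≤ Real.log (Nat.card A)
    have hlogA : 0 ≤ Real.log (Nat.card A) :=
      Real.log_nonneg (by exact_mod_cast hApos)
    rcases eq_or_lt_of_le (by positivity : (0:ℝ) ≤ ∏ i, ((n i : ℕ) : ℝ)) with h0 | h0
    · rw [hf]
      simp only []
      rw [← h0, div_zero]
      exact hlogA
    · rw [hf]
      simp only []
      rw [div_le_iff₀ h0]
      have h1 : Real.log (patternCount (avoiding X w) (boxF d n)) ≤
          Real.log (((Nat.card A : ℝ))^(∏ i, n i)) := by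
        apply Real.log_le_log
        · exact_mod_cast hcountpos n
        · exact_mod_cast hcount_ub n
      calc Real.log (patternCount (avoiding X w) (boxF d n))
          ≤ Real.log (((Nat.card A : ℝ))^(∏ i, n i)) := h1
        _ = ((∏ i, n i : ℕ) : ℝ) * Real.log (Nat.card A) := by rw [Real.log_pow]
        _ = (∏ i, ((n i : ℕ) : ℝ)) * Real.log (Nat.card A) := by rw [Nat.cast_prod]
        _ = Real.log (Nat.card A) * (∏ i, ((n i : ℕ) : ℝ)) := by ring
  set q : ℕ := M*t with hq
  have hq1 : 1 ≤ q := htM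
  set c0 : ℝ := Real.log 2 / ((2*q : ℕ) : ℝ)^d with hc0
  have h2q0 : (0:ℝ) < ((2*q : ℕ) : ℝ) := by
    have : 0 < 2*q := by omega
    exact_mod_cast this
  have hc0pos : 0 < c0 := by
    rw [hc0]
    exact div_pos (Real.log_pos (by norm_num)) (pow_pos h2q0 d)
  have hev : ∀ᶠ n in Filter.atTop, c0 ≤ f n := by
    rw [Filter.eventually_atTop]
    refine ⟨fun _ => 4*q, fun n hn => ?_⟩
    have hn' : ∀ i, 4*q ≤ n i := fun i => hn i
    have hprodpos : (0:ℝ) < ∏ i, ((n i : ℕ) : ℝ) := by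
      apply Finset.prod_pos
      intro i _
      have := hn' i
      have : 0 < n i := by omega
      exact_mod_cast this
    have haxis : ∀ i, ((n i : ℕ) : ℝ) / ((2*q : ℕ) : ℝ) ≤ ((n i / q - 1 : ℕ) : ℝ) := by
      intro i
      have h3 : 4 ≤ n i / q := (Nat.le_div_iff_mul_le (by omega)).mpr (by
        have := hn' i; omega)
      have h1 : n i < q * (n i / q) + q := by
        have hdm := Nat.div_add_mod (n i) q
        have hml := Nat.mod_lt (n i) (show 0 < q by omega)
        omega
      have hcastsub : ((n i / q - 1 : ℕ) : ℝ) = ((n i / q : ℕ) : ℝ) - 1 := by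
        rw [Nat.cast_sub (by omega)]
        norm_num
      rw [hcastsub, div_le_iff₀ (by positivity)]
      have hx : ((n i : ℕ) : ℝ) < (q:ℝ) * ((n i / q : ℕ) : ℝ) + q := by exact_mod_cast h1
      have hD4 : (4:ℝ) ≤ ((n i / q : ℕ) : ℝ) := by exact_mod_cast h3
      have hQ : (1:ℝ) ≤ (q:ℝ) := by exact_mod_cast hq1
      have h2q : ((2*q : ℕ) : ℝ) = 2*(q:ℝ) := by push_cast; ring
      rw [h2q]
      nlinarith [mul_nonneg (by linarith : (0:ℝ) ≤ (q:ℝ))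
        (by linarith : (0:ℝ) ≤ ((n i / q : ℕ) : ℝ) - 3)]
    have hprodle : (∏ i, ((n i : ℕ) : ℝ)) / ((2*q : ℕ) : ℝ)^d ≤
        ((∏ i, (n i / q - 1) : ℕ) : ℝ) := by
      rw [Nat.cast_prod]
      have hdiv : (∏ i, ((n i : ℕ) : ℝ)) / ((2*q : ℕ) : ℝ)^d =
          ∏ i, (((n i : ℕ) : ℝ) / ((2*q : ℕ) : ℝ)) := by
        rw [Finset.prod_div_distrib, Finset.prod_const, Finset.card_univ, Fintype.card_fin]
      rw [hdiv]
      apply Finset.prod_le_prod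
      · intro i _
        positivity
      · intro i _
        exact haxis i
    have hlogle : ((∏ i, (n i / q - 1) : ℕ) : ℝ) * Real.log 2 ≤
        Real.log (patternCount (avoiding X w) (boxF d n)) := by
      rw [← Real.log_pow]
      apply Real.log_le_log (by positivity)
      exact_mod_cast key n
    show c0 ≤ f n
    rw [hf]
    simp only []
    rw [hc0, div_le_div_iff₀ (pow_pos h2q0 d) hprodpos]
    calc Real.log 2 * ∏ i, ((n i : ℕ) : ℝ)
        = ((∏ i, ((n i : ℕ) : ℝ)) / ((2*q : ℕ) : ℝ)^d) * Real.log 2 * ((2*q : ℕ) : ℝ)^d := by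
          field_simp
      _ ≤ ((∏ i, (n i / q - 1) : ℕ) : ℝ) * Real.log 2 * ((2*q : ℕ) : ℝ)^d := by
          refine mul_le_mul_of_nonneg_right ?_ (le_of_lt (pow_pos h2q0 d))
          exact mul_le_mul_of_nonneg_right hprodle (Real.log_nonneg (by norm_num))
      _ ≤ Real.log (patternCount (avoiding X w) (boxF d n)) * ((2*q : ℕ) : ℝ)^d := by
          exact mul_le_mul_of_nonneg_right hlogle (le_of_lt (pow_pos h2q0 d))
  have hfinal : c0 ≤ topEnt (avoiding X w) := by
    rw [topEnt]
    exact Filter.le_limsup_of_frequently_le hev.frequently hbdd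
  exact lt_of_lt_of_le hc0pos hfinal
end
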